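/- Let λ > 0, and let X and Y be independent random variables with X Poisson-distributed with mean λ/4 and Y Poisson-distributed with mean 3λ/4. Then E[min(X,Y)] = λ/2 − (1/2)·e^{−λ}·Σ_{k=0}^{∞} k·(3^{−k/2} + 3^{k/2})·I_k((√3/2)·λ), where I_k denotes the modified Bessel function of the first kind, I_k(x) = Σ_{m=0}^{∞} (x/2)^{2m+k} / (m!·(m+k)!). -/

import Mathlib

/-!
Since `2 min(m, n) = m + n - (m - n)₊ - (n - m)₊`, it suffices to know `E[X] = λ/4`, `E[Y] = 3λ/4`
and the expected truncated differences. By independence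
`E[(X - Y)₊] = ∑ₖ k ∑ₙ P(X = n + k) P(Y = n)`, and for Poisson laws with rates `r t` and `t / r`
the inner sum is `e^{-(r t + t / r)} rᵏ I_k(2t)`, read off from the series of `I_k`. Here
`t = √3 λ / 4`, with `r = 1 / √3` for `E[(X - Y)₊]` and `r = √3` for `E[(Y - X)₊]`.
-/

open MeasureTheory ProbabilityTheory Finset

/-- The modified Bessel function of the first kind of integer order `k`:
`I_k(x) = Σ_{m=0}^∞ (x/2)^(2m+k) / (m!·(m+k)!)`. -/
noncomputable def besselI (k : ℕ) (x : ℝ) : ℝ :=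
  ∑' m : ℕ, (x / 2) ^ (2 * m + k) / ((m.factorial : ℝ) * ((m + k).factorial : ℝ))

open Real Function
open scoped NNReal Nat

lemma tsum_pow_div_factorial_mul_pow_div_factorial_eq_besselI {r : ℝ} (hr : r ≠ 0) (t : ℝ) (k : ℕ) :
    ∑' n : ℕ, (r * t) ^ (n + k) / (n + k)! * ((t / r) ^ n / n !) = r ^ k * besselI k (2 * t) := by
  rw [besselI, ← tsum_mul_left]
  refine tsum_congr fun n => ?_
  rw [mul_div_cancel_left₀ t two_ne_zero, div_pow, mul_pow]
  field_simp
  ring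

lemma tsum_poissonMeasure_real_add_mul_eq_besselI {a b : ℝ≥0} {r t : ℝ} (hr : r ≠ 0)
    (ha : (a : ℝ) = r * t) (hb : (b : ℝ) = t / r) (k : ℕ) :
    ∑' n : ℕ, Po(a).real {n + k} * Po(b).real {n} =
      exp (-(a + b : ℝ)) * r ^ k * besselI k (2 * t) := by
  simp_rw [poissonMeasure_real_singleton, ha, hb]
  rw [mul_assoc, ← tsum_pow_div_factorial_mul_pow_div_factorial_eq_besselI hr, ← tsum_mul_left]
  refine tsum_congr fun n => ?_
  rw [neg_add, exp_add]
  ring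

lemma tsum_poissonMeasure_real_quarter_threeQuarter {lam : ℝ} (hlam : 0 ≤ lam) (k : ℕ) :
    ∑' n : ℕ, Po((lam / 4).toNNReal).real {n + k} * Po((3 * lam / 4).toNNReal).real {n} =
      exp (-lam) * (√3)⁻¹ ^ k * besselI k (√3 / 2 * lam) := by
  have hsq : √3 * √3 = 3 := mul_self_sqrt zero_le_three
  rw [tsum_poissonMeasure_real_add_mul_eq_besselI (r := (√3)⁻¹) (t := √3 / 4 * lam) (by positivity)
    (by rw [coe_toNNReal _ (by positivity)]; field_simp)
    (by rw [coe_toNNReal _ (by positivity), div_inv_eq_mul]; linear_combination (-lam / 4) * hsq),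
    coe_toNNReal _ (by positivity), coe_toNNReal _ (by positivity)]
  ring_nf

lemma tsum_poissonMeasure_real_threeQuarter_quarter {lam : ℝ} (hlam : 0 ≤ lam) (k : ℕ) :
    ∑' n : ℕ, Po((3 * lam / 4).toNNReal).real {n + k} * Po((lam / 4).toNNReal).real {n} =
      exp (-lam) * √3 ^ k * besselI k (√3 / 2 * lam) := by
  have hsq : √3 * √3 = 3 := mul_self_sqrt zero_le_three
  rw [tsum_poissonMeasure_real_add_mul_eq_besselI (r := √3) (t := √3 / 4 * lam) (by positivity)
    (by rw [coe_toNNReal _ (by positivity)]; linear_combination (-lam / 4) * hsq)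
    (by rw [coe_toNNReal _ (by positivity)]; field_simp),
    coe_toNNReal _ (by positivity), coe_toNNReal _ (by positivity)]
  ring_nf

lemma hasSum_mul_natCast_poissonMeasure (r : ℝ≥0) :
    HasSum (fun n : ℕ => exp (-r) * r ^ n / n ! * n) r := by
  have hshift : (fun n : ℕ => exp (-r) * r ^ (n + 1) / (n + 1)! * ((n + 1 : ℕ) : ℝ)) =
      fun n => r * (exp (-r) * r ^ n / n !) := by
    funext n
    rw [Nat.factorial_succ]
    push_cast
    field_simp
    ring
  have h := (hasSum_one_poissonMeasure r).mul_left (r : ℝ)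
  rw [mul_one, ← hshift] at h
  exact (hasSum_nat_add_iff' 1).mp (by simpa using h)

lemma hasSum_integral_of_countable {α : Type*} [MeasurableSpace α] [Countable α]
    [MeasurableSingletonClass α] {μ : Measure α} {f : α → ℝ} (hf : Integrable f μ) :
    HasSum (fun x => μ.real {x} * f x) (∫ x, f x ∂μ) := by
  rw [← μ.sum_smul_dirac] at hf
  simpa [integral_smul_measure, measureReal_def, μ.sum_smul_dirac] using hasSum_integral_measure hf

lemma natCast_min_eq (m n : ℕ) :
    min (m : ℝ) n = (m + n - (m - n : ℕ) - (n - m : ℕ)) / 2 := by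
  rcases le_total m n with h | h
  · rw [min_eq_left (by exact_mod_cast h), Nat.sub_eq_zero_of_le h, Nat.cast_sub h]
    push_cast; ring
  · rw [min_eq_right (by exact_mod_cast h), Nat.sub_eq_zero_of_le h, Nat.cast_sub h]
    push_cast; ring

section

variable {Ω : Type*} [MeasurableSpace Ω] {P : Measure Ω}

lemma ProbabilityTheory.HasLaw.integrable_natCast_of_poissonMeasure {X : Ω → ℕ} {r : ℝ≥0}
    (hX : HasLaw X Po(r) P) : Integrable (fun ω => (X ω : ℝ)) P := by
  have h : Integrable (fun n : ℕ => (n : ℝ)) Po(r) := by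
    rw [integrable_poissonMeasure_iff]
    simpa using (hasSum_mul_natCast_poissonMeasure r).summable
  rw [← hX.map_eq] at h
  exact (integrable_map_measure .of_discrete hX.aemeasurable).mp h

lemma ProbabilityTheory.HasLaw.integral_natCast_of_poissonMeasure {X : Ω → ℕ} {r : ℝ≥0}
    (hX : HasLaw X Po(r) P) : ∫ ω, (X ω : ℝ) ∂P = r := by
  have h := hX.integral_comp (f := fun n : ℕ => (n : ℝ)) .of_discrete
  rw [Function.comp_def] at h
  rw [h, integral_poissonMeasure]
  exact (hasSum_mul_natCast_poissonMeasure r).tsum_eq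

lemma MeasureTheory.Integrable.natCast_tsub {X Y : Ω → ℕ}
    (hX : Integrable (fun ω => (X ω : ℝ)) P) (hXY : AEMeasurable (fun ω => (X ω, Y ω)) P) :
    Integrable (fun ω => ((X ω - Y ω : ℕ) : ℝ)) P := by
  have hmeas : Measurable fun p : ℕ × ℕ => ((p.1 - p.2 : ℕ) : ℝ) := .of_discrete
  exact hX.mono (hmeas.comp_aemeasurable hXY).aestronglyMeasurable <|
    ae_of_all _ fun ω => by simp

lemma integral_min_natCast_eq {X Y : Ω → ℕ} (hX : Integrable (fun ω => (X ω : ℝ)) P)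
    (hY : Integrable (fun ω => (Y ω : ℝ)) P) (hXY : AEMeasurable (fun ω => (X ω, Y ω)) P) :
    ∫ ω, min (X ω : ℝ) (Y ω) ∂P = (∫ ω, (X ω : ℝ) ∂P + ∫ ω, (Y ω : ℝ) ∂P
      - ∫ ω, ((X ω - Y ω : ℕ) : ℝ) ∂P - ∫ ω, ((Y ω - X ω : ℕ) : ℝ) ∂P) / 2 := by
  have hXY' := hX.natCast_tsub hXY
  have hYX' : Integrable (fun ω => ((Y ω - X ω : ℕ) : ℝ)) P :=
    hY.natCast_tsub (measurable_swap.comp_aemeasurable hXY)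
  simp_rw [natCast_min_eq]
  rw [integral_div, integral_sub _ hYX', integral_sub _ hXY', integral_add hX hY]
  exacts [hX.add hY, (hX.add hY).sub hXY']

lemma ProbabilityTheory.IndepFun.hasSum_integral_natCast_tsub [IsFiniteMeasure P] {X Y : Ω → ℕ}
    {μ ν : Measure ℕ} (hXY : IndepFun X Y P) (hX : HasLaw X μ P) (hY : HasLaw Y ν P)
    (hXint : Integrable (fun ω => (X ω : ℝ)) P) :
    HasSum (fun k : ℕ => k * ∑' n, μ.real {n + k} * ν.real {n})
      (∫ ω, ((X ω - Y ω : ℕ) : ℝ) ∂P) := by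
  have : IsFiniteMeasure ν := hY.map_eq ▸ inferInstance
  set g : ℕ × ℕ → ℝ := fun p => ((p.1 - p.2 : ℕ) : ℝ)
  have hlaw := hXY.hasLaw_prod hX hY
  have hg : Integrable g (μ.prod ν) := by
    rw [← hlaw.map_eq, integrable_map_measure .of_discrete hlaw.aemeasurable]
    exact hXint.natCast_tsub hlaw.aemeasurable
  have hsum : HasSum (fun p : ℕ × ℕ => μ.real {p.1} * ν.real {p.2} * g p)
      (∫ ω, g (X ω, Y ω) ∂P) := by
    rw [← Function.comp_def g, hlaw.integral_comp .of_discrete]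
    simpa only [← measureReal_prod_prod, Set.singleton_prod_singleton]
      using hasSum_integral_of_countable hg
  have hinj : Injective fun q : ℕ × ℕ => (q.2 + q.1, q.2) := by
    intro q q' h
    simp only [Prod.mk.injEq] at h
    ext <;> omega
  rw [← hinj.hasSum_iff] at hsum
  · refine hsum.prod_fiberwise fun k => ?_
    simpa [g, mul_comm, tsum_mul_left] using (hsum.summable.prod_factor k).hasSum
  · rintro ⟨m, n⟩ hmn
    have hle : m ≤ n := by
      by_contra! h
      exact hmn ⟨(m - n, n), Prod.ext (Nat.add_sub_cancel' h.le) rfl⟩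
    simp [g, Nat.sub_eq_zero_of_le hle]

end

theorem expected_min_of_poissons
    {Ω : Type*} [MeasurableSpace Ω] (P : Measure Ω) [IsProbabilityMeasure P]
    (lam : ℝ) (hlam : 0 < lam)
    (X Y : Ω → ℕ) (hX : Measurable X) (hY : Measurable Y)
    (hindep : IndepFun X Y P)
    (hXlaw : P.map X = poissonMeasure (Real.toNNReal (lam / 4)))
    (hYlaw : P.map Y = poissonMeasure (Real.toNNReal (3 * lam / 4))) :
    ∫ ω, (min (X ω) (Y ω) : ℝ) ∂P =
      lam / 2 - (1 / 2) * Real.exp (-lam) *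
        ∑' k : ℕ, (k : ℝ) * ((3 : ℝ) ^ (-(k : ℝ) / 2) + (3 : ℝ) ^ ((k : ℝ) / 2)) *
          besselI k (Real.sqrt 3 / 2 * lam) := by
  have hX' : HasLaw X Po((lam / 4).toNNReal) P := ⟨hX.aemeasurable, hXlaw⟩
  have hY' : HasLaw Y Po((3 * lam / 4).toNNReal) P := ⟨hY.aemeasurable, hYlaw⟩
  have hXint := hX'.integrable_natCast_of_poissonMeasure
  have hYint := hY'.integrable_natCast_of_poissonMeasure
  have hsum := (hindep.hasSum_integral_natCast_tsub hX' hY' hXint).add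
    (hindep.symm.hasSum_integral_natCast_tsub hY' hX' hYint)
  simp_rw [tsum_poissonMeasure_real_quarter_threeQuarter hlam.le,
    tsum_poissonMeasure_real_threeQuarter_quarter hlam.le] at hsum
  have hbessel : ∑' k : ℕ, (k : ℝ) * ((3 : ℝ) ^ (-(k : ℝ) / 2) + (3 : ℝ) ^ ((k : ℝ) / 2)) *
      besselI k (√3 / 2 * lam) =
        exp lam * (∫ ω, ((X ω - Y ω : ℕ) : ℝ) ∂P + ∫ ω, ((Y ω - X ω : ℕ) : ℝ) ∂P) := by
    rw [← (hsum.mul_left (exp lam)).tsum_eq]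
    refine tsum_congr fun k => ?_
    rw [rpow_div_two_eq_sqrt _ zero_le_three, rpow_div_two_eq_sqrt _ zero_le_three,
      rpow_neg (sqrt_nonneg 3), rpow_natCast, inv_pow, exp_neg]
    field_simp
  have hexp : exp (-lam) * exp lam = 1 := by rw [← exp_add, neg_add_cancel, exp_zero]
  rw [integral_min_natCast_eq hXint hYint (hX.prodMk hY).aemeasurable,
    hX'.integral_natCast_of_poissonMeasure, hY'.integral_natCast_of_poissonMeasure,
    coe_toNNReal _ (by positivity), coe_toNNReal _ (by positivity), hbessel]
  linear_combination (∫ ω, ((X ω - Y ω : ℕ) : ℝ) ∂P + ∫ ω, ((Y ω - X ω : ℕ) : ℝ) ∂P) / 2 * hexp
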